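/- arXiv:1905.02243 — 2 statements merged into one kernel-verified Lean document; each statement's English description precedes it below -/
import Mathlib

section
/- If ω₁ < 𝔠 (the negation of the Continuum Hypothesis), then the usco multimap P⁻¹ : [0,1]² ⊸ Ï² has no Borel-measurable selection, where P : Ï² → [0,1]² is the square of the projection p : Ï → [0,1] of the split interval onto the unit interval. -/
/-- The split interval: `[0,1] × {0,1}` with the lexicographic order. -/
abbrev SplitInterval : Type := Set.Icc (0:ℝ) 1 ×ₗ Bool

instance : TopologicalSpace SplitInterval := Preorder.topology SplitInterval

instance : OrderTopology SplitInterval := ⟨rfl⟩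

/-- The projection `⟨x,i⟩ ↦ x` of the split interval onto the unit interval. -/
def splitProj : SplitInterval → Set.Icc (0:ℝ) 1 := fun a => (ofLex a).1

/-- The square `P = p × p` of the projection `p`. -/
def splitProjSq : SplitInterval × SplitInterval → Set.Icc (0:ℝ) 1 × Set.Icc (0:ℝ) 1 :=
  fun z => (splitProj z.1, splitProj z.2)

/-!
Write `s z = (⟨z.1, i z⟩, ⟨z.2, j z⟩)` with `i z, j z : Bool` (the `side`s). Since
`⟨x, false⟩ ⋖ ⟨x, true⟩` in `Ï`, the half-lines `Iic ⟨x, false⟩` and `Ici ⟨x, true⟩` are open, so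
the product of these half-lines at `s z` is an open neighbourhood of `s z` whose preimage under `s`
lies in a closed quadrant at `z`.
On a segment of slope `1` the quadrant at a point with `i z ≠ j z` meets the segment only in `z`,
and on a segment of slope `-1` the same holds at points with `i z = j z`. Hence every subset of
the set of such points on the segment is Borel, which forces that set to be countable: an
uncountable Borel set has cardinality `𝔠`, and there are only `𝔠` Borel sets.
Sierpiński's argument then contradicts `ℵ₁ < 𝔠`: the exceptional sets of `ℵ₁` segments of slope
`1` cover only `ℵ₁` values of the other coordinate, so some segment of slope `-1` meets all of
these `ℵ₁` segments in points with `i = j`.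
-/

universe u

open Set Cardinal

theorem countable_of_forall_subset_measurableSet {α : Type*} [MeasurableSpace α]
    [StandardBorelSpace α] {E : Set α} (h : ∀ T ⊆ E, MeasurableSet T) : E.Countable := by
  by_contra hE
  have := (h E subset_rfl).standardBorel
  have hcont : 𝔠 ≤ #E := by
    have hE' : ¬ Countable E := by rwa [countable_coe_iff]
    have := mk_congr_lift (PolishSpace.measurableEquivNatBoolOfNotCountable hE').toEquiv
    simp only [mk_pi, mk_fintype, Fintype.card_bool, Nat.cast_ofNat, prod_const, mk_nat, lift_id,
      two_power_aleph0, lift_continuum] at this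
    rw [← lift_le.{0}, lift_continuum, this]
  have hsets : #(Set E) ≤ #{T : Set α // MeasurableSet T} :=
    mk_le_of_injective (f := fun A => ⟨(↑) '' A, h _ (Subtype.coe_image_subset E A)⟩)
      fun A B hAB => Subtype.val_injective.image_injective (congrArg Subtype.val hAB)
  have hborel : #{T : Set α // MeasurableSet T} ≤ 𝔠 := by
    rw [← MeasurableSpace.generateFrom_countableGeneratingSet (α := α)]
    exact MeasurableSpace.cardinal_measurableSet_le_continuum
      ((mk_le_aleph0_iff.2 MeasurableSpace.countable_countableGeneratingSet.to_subtype).trans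
        aleph0_le_continuum)
  refine (cantor 𝔠).not_ge ?_
  calc 2 ^ 𝔠 ≤ 2 ^ #E := power_le_power_left two_ne_zero hcont
    _ = #(Set E) := mk_set.symm
    _ ≤ 𝔠 := hsets.trans hborel

theorem countable_of_preimage_isOpen_eq_singleton {α β : Type*} [MeasurableSpace α]
    [StandardBorelSpace α] [TopologicalSpace β] {σ : α → β}
    (hσ : ∀ U : Set β, IsOpen U → MeasurableSet (σ ⁻¹' U)) {E : Set α} (W : α → Set β)
    (hW : ∀ t ∈ E, IsOpen (W t) ∧ σ ⁻¹' W t = {t}) : E.Countable := by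
  refine countable_of_forall_subset_measurableSet fun T hT => ?_
  have hT_eq : σ ⁻¹' ⋃ t ∈ T, W t = T := by
    rw [preimage_iUnion₂]
    exact (iUnion₂_congr fun t ht => (hW t (hT ht)).2).trans (biUnion_of_singleton T)
  exact hT_eq ▸ hσ _ (isOpen_biUnion fun t ht => (hW t (hT ht)).1)

theorem exists_not_countable_setOf_of_forall_countable {X Y : Type u} (Q : X → Y → Prop)
    (hX : ℵ₁ ≤ #X) (hY : ℵ₁ < #Y) (hrow : ∀ x, {y | ¬ Q x y}.Countable) :
    ∃ y, ¬ {x | Q x y}.Countable := by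
  obtain ⟨K, hK⟩ := le_mk_iff_exists_set.1 hX
  set N := ⋃ x ∈ K, {y | ¬ Q x y}
  have hN : #N < #Y :=
    calc #N ≤ #K * ⨆ x : K, #{y | ¬ Q x y} := mk_biUnion_le _ _
      _ ≤ ℵ₁ * ℵ₀ := by
        rw [hK]
        exact mul_le_mul_right (ciSup_le' fun x : K => le_aleph0_iff_set_countable.2 (hrow x)) _
      _ = ℵ₁ := mul_aleph0_eq (aleph0_le_aleph 1)
      _ < #Y := hY
  obtain ⟨y, hy⟩ := (ne_univ_iff_exists_notMem N).1 fun h => hN.ne (h ▸ mk_univ)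
  refine ⟨y, fun hcount => ?_⟩
  have hKsub : K ⊆ {x | Q x y} := fun x hx => by_contra fun hq => hy (mem_biUnion hx hq)
  exact aleph0_lt_aleph_one.not_ge (hK ▸ le_aleph0_iff_set_countable.2 (hcount.mono hKsub))

theorem Prod.Lex.toLex_false_covBy_toLex_true {α : Type*} [Preorder α] (x : α) :
    toLex (x, false) ⋖ toLex (x, true) :=
  Prod.Lex.toLex_covBy_toLex_iff.2 (Or.inl ⟨rfl, ⟨Bool.false_lt_true, by decide⟩⟩)

namespace SplitInterval

def side (a : SplitInterval) : Bool := (ofLex a).2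

def halfLine (a : SplitInterval) : Set SplitInterval :=
  if side a then Ici a else Iic a

theorem isOpen_halfLine (a : SplitInterval) : IsOpen (halfLine a) := by
  obtain ⟨⟨x, _ | _⟩, rfl⟩ := toLex.surjective a
  · rw [show halfLine (toLex (x, false)) = Iic (toLex (x, false)) from if_neg Bool.false_ne_true,
      ← (Prod.Lex.toLex_false_covBy_toLex_true x).Iio_eq]
    exact isOpen_Iio
  · rw [show halfLine (toLex (x, true)) = Ici (toLex (x, true)) from if_pos rfl,
      ← (Prod.Lex.toLex_false_covBy_toLex_true x).Ioi_eq]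
    exact isOpen_Ioi

theorem mem_halfLine_self (a : SplitInterval) : a ∈ halfLine a := by
  unfold halfLine
  split_ifs
  exacts [self_mem_Ici, self_mem_Iic]

theorem splitProj_mono : Monotone splitProj := Prod.Lex.monotone_fst_ofLex

end SplitInterval

section

open SplitInterval

variable {α : Type*} [MeasurableSpace α] [StandardBorelSpace α]
  {σ : α → SplitInterval × SplitInterval}

theorem countable_of_halfLine_prod_separates (hσ : ∀ U, IsOpen U → MeasurableSet (σ ⁻¹' U))
    {E : Set α}
    (hE : ∀ t ∈ E, ∀ t', (σ t').1 ∈ halfLine (σ t).1 → (σ t').2 ∈ halfLine (σ t).2 → t' = t) :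
    E.Countable :=
  countable_of_preimage_isOpen_eq_singleton hσ (fun t => halfLine (σ t).1 ×ˢ halfLine (σ t).2)
    fun t ht => ⟨(isOpen_halfLine _).prod (isOpen_halfLine _),
      subset_antisymm (fun t' h => hE t ht t' h.1 h.2)
        (singleton_subset_iff.2 ⟨mem_halfLine_self _, mem_halfLine_self _⟩)⟩

variable [LinearOrder α]

theorem countable_setOf_side_ne_of_strictMono (hσ : ∀ U, IsOpen U → MeasurableSet (σ ⁻¹' U))
    (h₁ : StrictMono fun t => splitProj (σ t).1) (h₂ : StrictMono fun t => splitProj (σ t).2) :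
    {t | side (σ t).1 ≠ side (σ t).2}.Countable := by
  refine countable_of_halfLine_prod_separates hσ fun t ht t' ht'₁ ht'₂ => ?_
  unfold halfLine at ht'₁ ht'₂
  split_ifs at ht'₁ ht'₂ with hb₁ hb₂ hb₂
  · exact absurd (hb₁.trans hb₂.symm) ht
  · exact le_antisymm (h₂.le_iff_le.1 (splitProj_mono ht'₂)) (h₁.le_iff_le.1 (splitProj_mono ht'₁))
  · exact le_antisymm (h₁.le_iff_le.1 (splitProj_mono ht'₁)) (h₂.le_iff_le.1 (splitProj_mono ht'₂))
  · simp_all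

theorem countable_setOf_side_eq_of_strictMono_strictAnti
    (hσ : ∀ U, IsOpen U → MeasurableSet (σ ⁻¹' U))
    (h₁ : StrictMono fun t => splitProj (σ t).1) (h₂ : StrictAnti fun t => splitProj (σ t).2) :
    {t | side (σ t).1 = side (σ t).2}.Countable := by
  refine countable_of_halfLine_prod_separates hσ fun t ht t' ht'₁ ht'₂ => ?_
  unfold halfLine at ht'₁ ht'₂
  split_ifs at ht'₁ ht'₂ with hb₁ hb₂ hb₂
  · exact le_antisymm (h₂.le_iff_ge.1 (splitProj_mono ht'₂)) (h₁.le_iff_le.1 (splitProj_mono ht'₁))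
  · simp_all
  · simp_all
  · exact le_antisymm (h₁.le_iff_le.1 (splitProj_mono ht'₁)) (h₂.le_iff_ge.1 (splitProj_mono ht'₂))

end

/-- Coordinates on `[0,1]²` in which the rows (`c` fixed) are segments of slope `1` and the columns
(`d` fixed) are segments of slope `-1`. -/
noncomputable def diagChart (c d : Icc (0:ℝ) 1) : Icc (0:ℝ) 1 × Icc (0:ℝ) 1 :=
  (⟨(c + d) / 2, by constructor <;> linarith [c.2.1, c.2.2, d.2.1, d.2.2]⟩,
    ⟨(1 - c + d) / 2, by constructor <;> linarith [c.2.1, c.2.2, d.2.1, d.2.2]⟩)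

theorem continuous_diagChart : Continuous (Function.uncurry diagChart) := by
  unfold Function.uncurry diagChart
  fun_prop

theorem strictMono_diagChart_fst (c : Icc (0:ℝ) 1) : StrictMono fun d => (diagChart c d).1 :=
  fun _ _ h => Subtype.coe_lt_coe.1 (by simp only [diagChart]; linarith [Subtype.coe_lt_coe.2 h])

theorem strictMono_diagChart_snd (c : Icc (0:ℝ) 1) : StrictMono fun d => (diagChart c d).2 :=
  fun _ _ h => Subtype.coe_lt_coe.1 (by simp only [diagChart]; linarith [Subtype.coe_lt_coe.2 h])

theorem strictMono_diagChart_fst_left (d : Icc (0:ℝ) 1) : StrictMono fun c => (diagChart c d).1 :=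
  fun _ _ h => Subtype.coe_lt_coe.1 (by simp only [diagChart]; linarith [Subtype.coe_lt_coe.2 h])

theorem strictAnti_diagChart_snd_left (d : Icc (0:ℝ) 1) : StrictAnti fun c => (diagChart c d).2 :=
  fun _ _ h => Subtype.coe_lt_coe.1 (by simp only [diagChart]; linarith [Subtype.coe_lt_coe.2 h])

theorem aleph_one_lt_mk_unitInterval (hch : Cardinal.aleph.{u} 1 < Cardinal.continuum) :
    ℵ₁ < #(Icc (0:ℝ) 1) := by
  rwa [mk_Icc_real zero_lt_one, ← lift_lt.{0, u}, lift_continuum, lift_aleph, Ordinal.lift_one]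

/-- If `ω₁ < 𝔠`, then the multimap `P⁻¹ : [0,1]² ⊸ Ï²` has no
Borel-measurable selection. -/
theorem no_borel_selection_of_neg_CH (hch : Cardinal.aleph 1 < Cardinal.continuum) :
    ¬ ∃ s : Set.Icc (0:ℝ) 1 × Set.Icc (0:ℝ) 1 → SplitInterval × SplitInterval,
        (∀ z, splitProjSq (s z) = z) ∧
        ∀ U : Set (SplitInterval × SplitInterval), IsOpen U → MeasurableSet (s ⁻¹' U) := by
  rintro ⟨s, hsel, hmeas⟩
  have hproj (z) : splitProj (s z).1 = z.1 ∧ splitProj (s z).2 = z.2 := Prod.ext_iff.1 (hsel z)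
  have hrow (c) := countable_setOf_side_ne_of_strictMono (σ := fun d => s (diagChart c d))
    (fun U hU => (continuous_diagChart.comp (Continuous.prodMk_right c)).measurable (hmeas U hU))
    (by simpa only [hproj] using strictMono_diagChart_fst c)
    (by simpa only [hproj] using strictMono_diagChart_snd c)
  have hcol (d) :=
    countable_setOf_side_eq_of_strictMono_strictAnti (σ := fun c => s (diagChart c d))
      (fun U hU => (continuous_diagChart.comp (Continuous.prodMk_left d)).measurable (hmeas U hU))
      (by simpa only [hproj] using strictMono_diagChart_fst_left d)
      (by simpa only [hproj] using strictAnti_diagChart_snd_left d)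
  have hI := aleph_one_lt_mk_unitInterval hch
  obtain ⟨d, hd⟩ := exists_not_countable_setOf_of_forall_countable
    (fun c d => SplitInterval.side (s (diagChart c d)).1 = SplitInterval.side (s (diagChart c d)).2)
    hI.le hI hrow
  exact hd (hcol d)
end

section
/- Under the Continuum Hypothesis ω₁ = 𝔠, the usco multimap P⁻¹ : [0,1]² ⊸ Ï² admits an F_σ-measurable selection, where P : Ï² → [0,1]² is the square of the projection p : Ï → [0,1]. -/
/-- A set is `Fσ` if it is a countable union of closed sets. -/
def IsFsigma {X : Type*} [TopologicalSpace X] (s : Set X) : Prop :=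
  ∃ F : ℕ → Set X, (∀ n, IsClosed (F n)) ∧ s = ⋃ n, F n

/-!
Colour `[0,1]` by `φ` and select `z ↦ ((z₁, φ z₁), (z₂, φ z₂))`. The preimage `W` of an open set
contains, around each of its points, a box that is one-sided in each coordinate, on the sides
prescribed by `φ`. Nearby points of `W \ interior W` of equal colours avoid each other's open
quadrants, so they form a weakly monotone relation. If `φ` is a *parity colouring* (along all but
countably many pairs of a strictly monotone relation, `φ x xor φ y` says whether it decreases),
such a relation lies on countably many vertical and horizontal lines. On a line, `W` is a one-sided
neighbourhood of each of its points, hence open up to a countable set, hence `Fσ`.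

Under CH, rank the closed weakly monotone relations in type `ω₁`, and view their strict parts as
the edges of a signed graph on `[0,1]`. Delete the edges leaving a fixed point of an odd composite
of relations of no larger rank: an odd composite is a strictly decreasing partial bijection, so it
has at most one fixed point, and only countably many edges of each relation go. Rotating an odd
cycle of what is left to start at its edge of maximal rank shows that this edge should have been
deleted; so the rest is 2-colourable consistently with the signs, by a parity colouring.
-/

open Set Filter Topology

section Fsigma

variable {X Y ι : Type*} [TopologicalSpace X] [TopologicalSpace Y] {s t : Set X}

theorem isFsigma_iff_isGδ_compl : IsFsigma s ↔ IsGδ sᶜ := by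
  rw [isGδ_iff_eq_iInter_nat]
  constructor
  · rintro ⟨F, hF, rfl⟩
    exact ⟨fun n => (F n)ᶜ, fun n => (hF n).isOpen_compl, by rw [compl_iUnion]⟩
  · rintro ⟨G, hG, hsG⟩
    refine ⟨fun n => (G n)ᶜ, fun n => (hG n).isClosed_compl, ?_⟩
    rw [← compl_iInter, ← hsG, compl_compl]

theorem IsFsigma.union (hs : IsFsigma s) (ht : IsFsigma t) : IsFsigma (s ∪ t) := by
  rw [isFsigma_iff_isGδ_compl, compl_union] at *
  exact hs.inter ht

theorem IsFsigma.inter_isClosed (hs : IsFsigma s) (ht : IsClosed t) : IsFsigma (s ∩ t) := by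
  rw [isFsigma_iff_isGδ_compl, compl_inter] at *
  exact hs.union ht.isOpen_compl.isGδ

theorem IsFsigma.biUnion {I : Set ι} (hI : I.Countable) {f : ι → Set X}
    (hf : ∀ i ∈ I, IsFsigma (f i)) : IsFsigma (⋃ i ∈ I, f i) := by
  simp only [isFsigma_iff_isGδ_compl, compl_iUnion] at *
  exact .biInter hI hf

theorem IsFsigma.preimage {f : X → Y} (hf : Continuous f) {s : Set Y} (hs : IsFsigma s) :
    IsFsigma (f ⁻¹' s) := by
  rw [isFsigma_iff_isGδ_compl, ← preimage_compl] at *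
  exact hs.preimage hf

theorem IsOpen.isFsigma [PerfectlyNormalSpace X] (hs : IsOpen s) : IsFsigma s :=
  isFsigma_iff_isGδ_compl.2 hs.isClosed_compl.isGδ

theorem Set.Countable.isFsigma [T1Space X] (hs : s.Countable) : IsFsigma s :=
  isFsigma_iff_isGδ_compl.2 hs.isGδ_compl

end Fsigma

section SideRay

variable {α : Type*} [LinearOrder α]

/-- Neighbourhoods of `toLex (x, c)` in `α ×ₗ Bool` project onto neighbourhoods of `x` within
this ray. -/
def sideRay (c : Bool) (x : α) : Set α := if c then Ici x else Iic x

def openSideRay (c : Bool) (x : α) : Set α := if c then Ioi x else Iio x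

theorem openSideRay_subset_sideRay (c : Bool) (x : α) : openSideRay c x ⊆ sideRay c x := by
  cases c
  exacts [Iio_subset_Iic_self, Ioi_subset_Ici_self]

theorem monotone_toLex_prodMk (ψ : α → Bool) : Monotone fun t => toLex (t, ψ t) := by
  intro t t' h
  rcases h.lt_or_eq with h | rfl
  · exact (Prod.Lex.toLex_lt_toLex.2 (Or.inl h)).le
  · rfl

theorem fst_ofLex_lt_of_lt_toLex_false {l : α ×ₗ Bool} {x : α} (h : l < toLex (x, false)) :
    (ofLex l).1 < x := by
  rcases Prod.Lex.lt_iff.1 h with h | ⟨-, h⟩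
  · exact h
  · simp [Bool.lt_iff] at h

theorem lt_fst_ofLex_of_toLex_true_lt {u : α ×ₗ Bool} {x : α} (h : toLex (x, true) < u) :
    x < (ofLex u).1 := by
  rcases Prod.Lex.lt_iff.1 h with h | ⟨-, h⟩
  · exact h
  · simp [Bool.lt_iff] at h

variable [TopologicalSpace α] [OrderTopology α]

theorem isOpen_openSideRay (c : Bool) (x : α) : IsOpen (openSideRay c x) := by
  cases c
  exacts [isOpen_Iio, isOpen_Ioi]

theorem nhdsWithin_inter_openSideRay_eq_bot {s : Set α} {c : Bool} {x : α}
    (hs : s ∈ 𝓝[sideRay c x] x) : 𝓝[(s \ interior s) ∩ openSideRay c x] x = ⊥ := by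
  obtain ⟨u, hu, hxu, hus⟩ := mem_nhdsWithin.1 hs
  have hint : u ∩ openSideRay c x ⊆ interior s :=
    interior_maximal (fun y hy => hus ⟨hy.1, openSideRay_subset_sideRay c x hy.2⟩)
      (hu.inter (isOpen_openSideRay c x))
  refine empty_mem_iff_bot.1 (mem_nhdsWithin.2 ⟨u, hu, hxu, ?_⟩)
  rintro y ⟨hyu, ⟨-, hys⟩, hyc⟩
  exact hys (hint ⟨hyu, hyc⟩)

theorem countable_diff_interior_of_mem_nhdsWithin_sideRay [SecondCountableTopology α]
    {s : Set α} (hs : ∀ x ∈ s, ∃ c, s ∈ 𝓝[sideRay c x] x) : (s \ interior s).Countable := by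
  refine ((countable_setOfPred_isolated_right_within (s := s \ interior s)).union
    (countable_setOfPred_isolated_left_within (s := s \ interior s))).mono fun x hx => ?_
  obtain ⟨c, hc⟩ := hs x hx.1
  have := nhdsWithin_inter_openSideRay_eq_bot hc
  cases c
  exacts [Or.inr ⟨hx, this⟩, Or.inl ⟨hx, this⟩]

theorem isFsigma_of_mem_nhdsWithin_sideRay [SecondCountableTopology α] [PerfectlyNormalSpace α]
    {s : Set α} (hs : ∀ x ∈ s, ∃ c, s ∈ 𝓝[sideRay c x] x) : IsFsigma s := by
  rw [← union_sdiff_cancel (interior_subset (s := s))]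
  exact isOpen_interior.isFsigma.union
    (countable_diff_interior_of_mem_nhdsWithin_sideRay hs).isFsigma

theorem tendsto_toLex_nhdsWithin_sideRay [TopologicalSpace (α ×ₗ Bool)]
    [OrderTopology (α ×ₗ Bool)] (ψ : α → Bool) (x : α) :
    Tendsto (fun t => toLex (t, ψ t)) (𝓝[sideRay (ψ x) x] x) (𝓝 (toLex (x, ψ x))) := by
  have hmono := monotone_toLex_prodMk ψ
  rw [tendsto_order]
  refine ⟨fun l hl => ?_, fun u hu => ?_⟩
  · cases hx : ψ x <;> rw [hx] at hl
    · filter_upwards [nhdsWithin_le_nhds (Ioi_mem_nhds (fst_ofLex_lt_of_lt_toLex_false hl))]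
        with t ht
      exact Prod.Lex.lt_iff.2 (Or.inl ht)
    · filter_upwards [self_mem_nhdsWithin] with t ht
      have := hmono ht
      simp only [hx] at this
      exact hl.trans_le this
  · cases hx : ψ x <;> rw [hx] at hu
    · filter_upwards [self_mem_nhdsWithin] with t ht
      have := hmono ht
      simp only [hx] at this
      exact this.trans_lt hu
    · filter_upwards [nhdsWithin_le_nhds (Iio_mem_nhds (lt_fst_ofLex_of_toLex_true_lt hu))]
        with t ht
      exact Prod.Lex.lt_iff.2 (Or.inl ht)

end SideRay

section StrictPart

open scoped SetRel

variable {α β : Type*}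

def multiValued (R : SetRel α β) : Set α :=
  {x | ∃ y y', x ~[R] y ∧ x ~[R] y' ∧ y ≠ y'}

def strictPart (R : SetRel α β) : SetRel α β :=
  {p ∈ R | p.1 ∉ multiValued R ∧ p.2 ∉ multiValued R.inv}

theorem diff_strictPart_subset (R : SetRel α β) :
    R \ strictPart R ⊆ Prod.fst ⁻¹' multiValued R ∪ Prod.snd ⁻¹' multiValued R.inv := by
  rintro p ⟨hp, hnot⟩
  by_contra h
  simp only [mem_union, Set.mem_preimage, not_or] at h
  exact hnot ⟨hp, h⟩

end StrictPart

section MonoRel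

open scoped SetRel

variable {α : Type*} [LinearOrder α] {anti : Bool} {x y : α}

def orientedLT : Bool → α → α → Prop
  | false, x, y => x < y
  | true, x, y => y < x

@[simp] theorem orientedLT_false : orientedLT false x y ↔ x < y := .rfl

@[simp] theorem orientedLT_true : orientedLT true x y ↔ y < x := .rfl

theorem orientedLT_not : orientedLT (!anti) x y ↔ orientedLT anti y x := by
  cases anti <;> rfl

theorem orientedLT.ne (h : orientedLT anti x y) : x ≠ y := by
  cases anti
  exacts [ne_of_lt h, ne_of_gt h]

theorem orientedLT.not_orientedLT (h : orientedLT anti x y) : ¬ orientedLT anti y x := by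
  cases anti
  exacts [lt_asymm h, lt_asymm h]

theorem orientedLT_of_ne_of_not_orientedLT (hne : x ≠ y) (h : ¬ orientedLT anti y x) :
    orientedLT anti x y := by
  cases anti
  exacts [lt_of_le_of_ne (not_lt.1 h) hne, lt_of_le_of_ne (not_lt.1 h) hne.symm]

theorem isOpen_setOf_orientedLT [TopologicalSpace α] [OrderClosedTopology α] {β : Type*}
    [TopologicalSpace β] {f g : β → α} (hf : Continuous f) (hg : Continuous g) :
    IsOpen {b | orientedLT anti (f b) (g b)} := by
  cases anti
  exacts [isOpen_lt hf hg, isOpen_lt hg hf]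

/-- The `↔` makes `R` the graph of a partial bijection, increasing, or decreasing if `anti`. -/
def IsStrictMonoRel (anti : Bool) (R : SetRel α α) : Prop :=
  ∀ p ∈ R, ∀ q ∈ R, (p.1 < q.1 ↔ orientedLT anti p.2 q.2)

def IsWeakMonoRel (anti : Bool) (R : SetRel α α) : Prop :=
  ∀ p ∈ R, ∀ q ∈ R, p.1 < q.1 → ¬ orientedLT anti q.2 p.2

theorem isStrictMonoRel_id : IsStrictMonoRel false (SetRel.id : SetRel α α) := by
  rintro ⟨x, _⟩ rfl ⟨y, _⟩ rfl
  rfl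

namespace IsStrictMonoRel

variable {anti' : Bool} {R S : SetRel α α} {p q : α × α}

theorem orientedLT_iff (h : IsStrictMonoRel anti R) (hp : p ∈ R) (hq : q ∈ R) (c : Bool) :
    orientedLT c p.1 q.1 ↔ orientedLT (xor c anti) p.2 q.2 := by
  cases c
  · simpa using h p hp q hq
  · simpa [orientedLT_not] using h q hq p hp

theorem inv (h : IsStrictMonoRel anti R) : IsStrictMonoRel anti R.inv := fun p hp q hq => by
  simpa using (h.orientedLT_iff hp hq anti).symm

theorem comp (hR : IsStrictMonoRel anti R) (hS : IsStrictMonoRel anti' S) :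
    IsStrictMonoRel (xor anti anti') (R ○ S) := by
  rintro ⟨x, z⟩ ⟨y, hxy, hyz⟩ ⟨x', z'⟩ ⟨y', hxy', hyz'⟩
  exact (hR _ hxy _ hxy').trans (hS.orientedLT_iff hyz hyz' anti)

theorem eq_of_mem_of_mem (h : IsStrictMonoRel true R) (hx : (x, x) ∈ R) (hy : (y, y) ∈ R) :
    x = y := by
  have hxy : x < y ↔ y < x := h _ hx _ hy
  rcases lt_trichotomy x y with hlt | heq | hgt
  exacts [(lt_asymm hlt (hxy.1 hlt)).elim, heq, (lt_asymm hgt (hxy.2 hgt)).elim]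

theorem injOn_fst (h : IsStrictMonoRel anti R) : InjOn Prod.fst R := by
  intro p hp q hq he
  have hlt : ¬ p.1 < q.1 := he.not_lt
  have hgt : ¬ q.1 < p.1 := he.symm.not_lt
  rw [h p hp q hq] at hlt
  rw [h q hq p hp] at hgt
  by_contra hne
  exact hlt (orientedLT_of_ne_of_not_orientedLT (fun h2 => hne (Prod.ext he h2)) hgt)

theorem injOn_snd (h : IsStrictMonoRel anti R) : InjOn Prod.snd R := fun p hp q hq he =>
  Prod.swap_injective
    (h.inv.injOn_fst (show p.swap ∈ R.inv from hp) (show q.swap ∈ R.inv from hq) he)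

theorem countable_inter_preimage_fst (h : IsStrictMonoRel anti R) {A : Set α}
    (hA : A.Countable) : (R ∩ Prod.fst ⁻¹' A).Countable :=
  MapsTo.countable_of_injOn (f := Prod.fst) (fun _ hp => hp.2)
    (h.injOn_fst.mono inter_subset_left) hA

theorem countable_inter_preimage_snd (h : IsStrictMonoRel anti R) {B : Set α}
    (hB : B.Countable) : (R ∩ Prod.snd ⁻¹' B).Countable :=
  MapsTo.countable_of_injOn (f := Prod.snd) (fun _ hp => hp.2)
    (h.injOn_snd.mono inter_subset_left) hB

theorem isWeakMonoRel (h : IsStrictMonoRel anti R) : IsWeakMonoRel anti R :=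
  fun p hp q hq hlt => ((h p hp q hq).1 hlt).not_orientedLT

end IsStrictMonoRel

namespace IsWeakMonoRel

variable {R : SetRel α α} {p q : α × α}

theorem not_orientedLT (h : IsWeakMonoRel anti R) (hp : p ∈ R) (hq : q ∈ R) (c : Bool)
    (hlt : orientedLT c p.1 q.1) : ¬ orientedLT (xor c anti) q.2 p.2 := by
  cases c
  · simpa using h p hp q hq (by simpa using hlt)
  · simpa [orientedLT_not] using h q hq p hp (by simpa using hlt)

theorem inv (h : IsWeakMonoRel anti R) : IsWeakMonoRel anti R.inv := fun p hp q hq hlt ho =>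
  absurd hlt (by simpa using h.not_orientedLT hq hp anti ho)

theorem closure [TopologicalSpace α] [OrderClosedTopology α] (h : IsWeakMonoRel anti R) :
    IsWeakMonoRel anti (_root_.closure R) := by
  have hopen : IsOpen {z : (α × α) × (α × α) | z.1.1 < z.2.1 ∧ orientedLT anti z.2.2 z.1.2} :=
    (isOpen_lt (by fun_prop) (by fun_prop)).inter
      (isOpen_setOf_orientedLT (by fun_prop) (by fun_prop))
  have hsub : _root_.closure R ×ˢ _root_.closure R ⊆
      {z | z.1.1 < z.2.1 ∧ orientedLT anti z.2.2 z.1.2}ᶜ := by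
    rw [← closure_prod_eq]
    exact closure_minimal (fun z hz hbad => h _ hz.1 _ hz.2 hbad.1 hbad.2)
      hopen.isClosed_compl
  exact fun p hp q hq hlt ho => hsub (mk_mem_prod hp hq) ⟨hlt, ho⟩

theorem isStrictMonoRel_strictPart (h : IsWeakMonoRel anti R) :
    IsStrictMonoRel anti (strictPart R) := by
  rintro p ⟨hp, hp₁, hp₂⟩ q ⟨hq, -, -⟩
  constructor
  · intro hlt
    refine orientedLT_of_ne_of_not_orientedLT (fun he => hp₂ ?_) (h p hp q hq hlt)
    exact ⟨p.1, q.1, hp, he ▸ hq, hlt.ne⟩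
  · intro ho
    rcases lt_trichotomy p.1 q.1 with hlt | he | hgt
    · exact hlt
    · exact absurd ⟨p.2, q.2, hp, he ▸ hq, ho.ne⟩ hp₁
    · exact absurd ho (h q hq p hp hgt)

theorem countable_multiValued [TopologicalSpace α] [OrderTopology α] [DenselyOrdered α]
    [TopologicalSpace.SeparableSpace α] (h : IsWeakMonoRel anti R) :
    (multiValued R).Countable := by
  have hfib : ∀ x ∈ multiValued R, ∃ y y', (x, y) ∈ R ∧ (x, y') ∈ R ∧ y < y' := by
    rintro x ⟨y, y', hy, hy', hne⟩
    rcases hne.lt_or_gt with hlt | hlt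
    exacts [⟨y, y', hy, hy', hlt⟩, ⟨y', y, hy', hy, hlt⟩]
  choose! lo hi hlo hhi hlt using hfib
  have key : ∀ x ∈ multiValued R, ∀ x' ∈ multiValued R, x < x' →
      Disjoint (Ioo (lo x) (hi x)) (Ioo (lo x') (hi x')) := by
    intro x hx x' hx' hxx'
    refine disjoint_left.2 fun t ht ht' => ?_
    cases anti
    · exact h _ (hhi x hx) _ (hlo x' hx') hxx' (ht'.1.trans ht.2)
    · exact h _ (hlo x hx) _ (hhi x' hx') hxx' (ht.1.trans ht'.2)
  refine PairwiseDisjoint.countable_of_isOpen (fun x hx x' hx' hne => ?_)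
    (fun _ _ => isOpen_Ioo) (fun x hx => nonempty_Ioo.2 (hlt x hx))
  rcases hne.lt_or_gt with hxx' | hxx'
  exacts [key x hx x' hx' hxx', (key x' hx' x hx hxx').symm]

end IsWeakMonoRel

end MonoRel

section SignedColoring

open scoped SetRel

variable {α ι : Type*} (R : ι → SetRel α α) (σ : ι → Bool)

/-- Words in the letters `(i, d)` are the walks of the signed graph with edge sets `R i` of sign
`σ i`; the letter `(i, true)` crosses an edge of `R i` backwards. -/
def letterRel (l : ι × Bool) : SetRel α α := if l.2 then (R l.1).inv else R l.1

def wordRel : List (ι × Bool) → SetRel α α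
  | [] => SetRel.id
  | l :: w => letterRel R l ○ wordRel w

def wordSign : List (ι × Bool) → Bool
  | [] => false
  | l :: w => xor (σ l.1) (wordSign w)

def reverseWord (w : List (ι × Bool)) : List (ι × Bool) :=
  (w.map fun l => (l.1, !l.2)).reverse

def oddFixedPoints (S : Set ι) : Set α :=
  {x | ∃ w : List (ι × Bool), (∀ l ∈ w, l.1 ∈ S) ∧ (x, x) ∈ wordRel R w ∧ wordSign σ w = true}

variable {R σ}

theorem wordRel_append (u v : List (ι × Bool)) :
    wordRel R (u ++ v) = wordRel R u ○ wordRel R v := by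
  induction u with
  | nil => simp [wordRel]
  | cons l u ih => simp [wordRel, ih, SetRel.comp_assoc]

theorem wordSign_append (u v : List (ι × Bool)) :
    wordSign σ (u ++ v) = xor (wordSign σ u) (wordSign σ v) := by
  induction u with
  | nil => simp [wordSign]
  | cons l u ih => simp [wordSign, ih]

theorem mem_reverseWord {w : List (ι × Bool)} {l : ι × Bool} :
    l ∈ reverseWord w ↔ (l.1, !l.2) ∈ w := by
  constructor
  · simp only [reverseWord, List.mem_reverse, List.mem_map]
    rintro ⟨l', hl', rfl⟩
    simpa using hl'
  · intro hl
    simp only [reverseWord, List.mem_reverse, List.mem_map]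
    exact ⟨_, hl, by simp⟩

theorem wordRel_reverseWord (w : List (ι × Bool)) :
    wordRel R (reverseWord w) = (wordRel R w).inv := by
  induction w with
  | nil => simp [reverseWord, wordRel]
  | cons l w ih =>
    have hl : letterRel R (l.1, !l.2) = (letterRel R l).inv := by
      obtain ⟨i, d⟩ := l
      cases d <;> simp [letterRel]
    simp only [reverseWord, List.map_cons, List.reverse_cons] at ih ⊢
    rw [wordRel_append, ih, wordRel, wordRel, wordRel, SetRel.comp_id, hl, SetRel.inv_comp]

theorem wordSign_reverseWord (w : List (ι × Bool)) :
    wordSign σ (reverseWord w) = wordSign σ w := by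
  induction w with
  | nil => rfl
  | cons l w ih =>
    simp only [reverseWord, List.map_cons, List.reverse_cons] at ih ⊢
    rw [wordSign_append, ih, wordSign, wordSign, wordSign, Bool.xor_false, Bool.xor_comm]

theorem wordSign_eq_of_mem_wordRel (hodd : ∀ w x, (x, x) ∈ wordRel R w → wordSign σ w = false)
    {u v : List (ι × Bool)} {x y : α} (hu : (x, y) ∈ wordRel R u) (hv : (x, y) ∈ wordRel R v) :
    wordSign σ u = wordSign σ v := by
  have := hodd (u ++ reverseWord v) x (by
    rw [wordRel_append, wordRel_reverseWord]
    exact ⟨y, hu, hv⟩)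
  rw [wordSign_append, wordSign_reverseWord] at this
  simpa using this

theorem exists_coloring_of_forall_wordSign_eq_false
    (hodd : ∀ w x, (x, x) ∈ wordRel R w → wordSign σ w = false) :
    ∃ φ : α → Bool, ∀ i, ∀ p ∈ R i, xor (φ p.1) (φ p.2) = σ i := by
  let s : Setoid α :=
    { r := fun x y => ∃ w, (x, y) ∈ wordRel R w
      iseqv :=
        { refl := fun _ => ⟨[], rfl⟩
          symm := fun ⟨w, hw⟩ => ⟨reverseWord w, by rw [wordRel_reverseWord]; exact hw⟩
          trans := fun ⟨u, hu⟩ ⟨v, hv⟩ => ⟨u ++ v, by rw [wordRel_append]; exact ⟨_, hu, hv⟩⟩ } }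
  choose path hpath using fun x => Quotient.mk_out (s := s) x
  refine ⟨fun x => wordSign σ (path x), fun i p hp => ?_⟩
  have hedge : (p.1, p.2) ∈ wordRel R [(i, false)] := ⟨p.2, hp, rfl⟩
  have hrep : (Quotient.mk s p.1).out = (Quotient.mk s p.2).out := by
    rw [Quotient.sound (show ∃ w, (p.1, p.2) ∈ wordRel R w from ⟨_, hedge⟩)]
  have hwalk : ((Quotient.mk s p.2).out, p.2) ∈ wordRel R (path p.1 ++ [(i, false)]) := by
    rw [wordRel_append, ← hrep]
    exact ⟨p.1, hpath p.1, hedge⟩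
  have := wordSign_eq_of_mem_wordRel hodd hwalk (hpath p.2)
  rw [wordSign_append] at this
  simp only [wordSign, Bool.xor_false] at this
  show xor (wordSign σ (path p.1)) (wordSign σ (path p.2)) = σ i
  rw [← this, ← Bool.xor_assoc, Bool.xor_self, Bool.false_xor]

theorem wordRel_mono {R' : ι → SetRel α α} (h : ∀ i, R' i ⊆ R i) (w : List (ι × Bool)) :
    wordRel R' w ⊆ wordRel R w := by
  induction w with
  | nil => exact subset_rfl
  | cons l w ih =>
    refine SetRel.comp_subset_comp ?_ ih
    unfold letterRel
    split_ifs
    exacts [fun p hp => h l.1 hp, h l.1]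

theorem countable_setOf_forall_mem {β : Type*} {T : Set β} (hT : T.Countable) :
    {w : List β | ∀ l ∈ w, l ∈ T}.Countable := by
  have := hT.to_subtype
  refine (countable_range (List.map ((↑) : T → β))).mono fun w hw => ?_
  lift w to List T using hw
  exact mem_range_self _

section LinearOrder

variable [LinearOrder α]

theorem IsStrictMonoRel.wordRel (hR : ∀ i, IsStrictMonoRel (σ i) (R i)) (w : List (ι × Bool)) :
    IsStrictMonoRel (wordSign σ w) (wordRel R w) := by
  induction w with
  | nil => exact isStrictMonoRel_id
  | cons l w ih =>
    have hl : IsStrictMonoRel (σ l.1) (letterRel R l) := by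
      unfold letterRel
      split_ifs
      exacts [(hR l.1).inv, hR l.1]
    exact hl.comp ih

theorem countable_oddFixedPoints (hR : ∀ i, IsStrictMonoRel (σ i) (R i)) {S : Set ι}
    (hS : S.Countable) : (oddFixedPoints R σ S).Countable := by
  have hW : {w : List (ι × Bool) | ∀ l ∈ w, l ∈ S ×ˢ univ}.Countable :=
    countable_setOf_forall_mem (hS.prod countable_univ)
  refine (hW.biUnion fun w _ => Set.Subsingleton.countable (s :=
    {x | (x, x) ∈ wordRel R w ∧ wordSign σ w = true}) ?_).mono ?_
  · rintro x ⟨hx, hw⟩ y ⟨hy, -⟩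
    exact (hw ▸ IsStrictMonoRel.wordRel hR w).eq_of_mem_of_mem hx hy
  · rintro x ⟨w, hw, hx, hs⟩
    exact mem_biUnion (fun l hl => ⟨hw l hl, trivial⟩) ⟨hx, hs⟩

end LinearOrder

end SignedColoring

section RankedColoring

open scoped SetRel

variable {α ι β : Type*} [LinearOrder β] {R : ι → SetRel α α} {σ : ι → Bool}

def prunedRel (R : ι → SetRel α α) (σ : ι → Bool) (rank : ι → β) (i : ι) : SetRel α α :=
  {p ∈ R i | p.1 ∉ oddFixedPoints R σ {k | rank k ≤ rank i}}

theorem prunedRel_subset (rank : ι → β) (i : ι) : prunedRel R σ rank i ⊆ R i := fun _ hp => hp.1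

/-- Rotating the walk to start with the edge `(y, z)` of maximal rank `i` makes `y` a fixed point
of an odd word in letters of rank at most that of `i`, so this edge was pruned. -/
theorem wordSign_eq_false_of_max_rank {rank : ι → β} {w : List (ι × Bool)} {x : α} {i : ι}
    (hx : (x, x) ∈ wordRel (prunedRel R σ rank) w) (hi : (i, false) ∈ w)
    (hmax : ∀ l ∈ w, rank l.1 ≤ rank i) : wordSign σ w = false := by
  obtain ⟨u, v, rfl⟩ := List.append_of_mem hi
  rw [wordRel_append] at hx
  obtain ⟨y, hxy, z, hyz, hzx⟩ := hx
  rw [Bool.eq_false_iff]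
  refine fun hw => hyz.2 ⟨(i, false) :: v ++ u, fun l hl => hmax l ?_, ?_, ?_⟩
  · simp only [List.mem_append, List.mem_cons] at hl ⊢
    tauto
  · rw [wordRel_append]
    exact ⟨x, ⟨z, prunedRel_subset rank i hyz, wordRel_mono (prunedRel_subset rank) v hzx⟩,
      wordRel_mono (prunedRel_subset rank) u hxy⟩
  · rw [wordSign_append, Bool.xor_comm, ← wordSign_append, hw]

theorem wordSign_eq_false_of_mem_wordRel_prunedRel {rank : ι → β} {w : List (ι × Bool)} {x : α}
    (hx : (x, x) ∈ wordRel (prunedRel R σ rank) w) : wordSign σ w = false := by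
  classical
  rcases eq_or_ne w [] with rfl | hne
  · rfl
  obtain ⟨⟨i, d⟩, hl, hmax⟩ :=
    w.toFinset.exists_max_image (fun l => rank l.1) ((List.toFinset_nonempty_iff w).2 hne)
  simp only [List.mem_toFinset] at hl hmax
  cases d
  · exact wordSign_eq_false_of_max_rank hx hl hmax
  · have hx' : (x, x) ∈ wordRel (prunedRel R σ rank) (reverseWord w) := by
      rw [wordRel_reverseWord]
      exact hx
    rw [← wordSign_reverseWord]
    exact wordSign_eq_false_of_max_rank hx' (mem_reverseWord.2 hl)
      fun l hl => hmax (l.1, !l.2) (mem_reverseWord.1 hl)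

theorem exists_coloring_of_rank [LinearOrder α] (rank : ι → β)
    (hrank : ∀ i, {k | rank k ≤ rank i}.Countable) (hR : ∀ i, IsStrictMonoRel (σ i) (R i)) :
    ∃ φ : α → Bool, ∀ i, {p ∈ R i | xor (φ p.1) (φ p.2) ≠ σ i}.Countable := by
  obtain ⟨φ, hφ⟩ := exists_coloring_of_forall_wordSign_eq_false (R := prunedRel R σ rank)
    (σ := σ) fun _ _ hx => wordSign_eq_false_of_mem_wordRel_prunedRel hx
  refine ⟨φ, fun i => ((hR i).countable_inter_preimage_fst
    (countable_oddFixedPoints hR (hrank i))).mono ?_⟩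
  rintro p ⟨hp, hviol⟩
  exact ⟨hp, by_contra fun hB => hviol (hφ i p ⟨hp, hB⟩)⟩

end RankedColoring

section ContinuumHypothesis

open Cardinal

universe u v

theorem aleph_one_eq_continuum_iff :
    (ℵ₁ : Cardinal.{u}) = 𝔠 ↔ (ℵ₁ : Cardinal.{v}) = 𝔠 := by
  rw [← lift_inj.{u, v}, lift_aleph, lift_continuum, Ordinal.lift_one,
    ← lift_inj.{v, u} (a := ℵ₁), lift_aleph, lift_continuum, Ordinal.lift_one]

theorem exists_rank_countable_Iic {ι : Type u} (h : #ι ≤ ℵ₁) :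
    ∃ rank : ι → (ℵ₁ : Cardinal.{u}).ord.ToType, ∀ i, {k | rank k ≤ rank i}.Countable := by
  obtain ⟨e⟩ := (le_def _ _).1 (h.trans_eq (mk_ord_toType _).symm)
  refine ⟨e, fun i => ?_⟩
  have hIio : (Iio (e i)).Countable := by
    refine le_aleph0_iff_set_countable.1 (lt_aleph_one_iff.1 ?_)
    simpa using mk_Iio_lt (e i) (by rw [mk_ord_toType, Ordinal.type_toType])
  have hIic : (Iic (e i)).Countable := Iio_insert (a := e i) ▸ hIio.insert _
  exact hIic.preimage e.injective

theorem mk_closeds_le_continuum {X : Type u} [TopologicalSpace X] [SecondCountableTopology X] :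
    #(TopologicalSpace.Closeds X) ≤ 𝔠 := by
  obtain ⟨b, hbc, -, hb⟩ := TopologicalSpace.exists_countable_basis X
  have hbasis : ∀ (C : TopologicalSpace.Closeds X) x,
      x ∉ (C : Set X) ↔ ∃ u : b, x ∈ (u : Set X) ∧ Disjoint (u : Set X) C := by
    refine fun C x => ⟨fun hx => ?_, fun ⟨u, hxu, hu⟩ => hu.notMem_of_mem_left hxu⟩
    obtain ⟨u, hub, hxu, huC⟩ := hb.exists_subset_of_mem_open hx C.isClosed.isOpen_compl
    exact ⟨⟨u, hub⟩, hxu, subset_compl_iff_disjoint_right.1 huC⟩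
  have hinj : Function.Injective
      fun C : TopologicalSpace.Closeds X => {u : b | Disjoint (u : Set X) C} := by
    intro C D hCD
    ext x
    have hu : ∀ u : b, Disjoint (u : Set X) C ↔ Disjoint (u : Set X) D := fun u =>
      Set.ext_iff.1 hCD u
    rw [← not_iff_not, hbasis C, hbasis D]
    simp only [hu]
  have := hbc.to_subtype
  calc #(TopologicalSpace.Closeds X) ≤ #(Set b) := mk_le_of_injective hinj
    _ = 2 ^ #b := mk_set
    _ ≤ 2 ^ ℵ₀ := power_le_power_left two_ne_zero mk_le_aleph0
    _ = 𝔠 := two_power_aleph0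

end ContinuumHypothesis

section ParityColoring

open Cardinal

universe u

variable {α : Type u} [LinearOrder α]

def IsParityColoring (φ : α → Bool) : Prop :=
  ∀ anti (R : SetRel α α), IsStrictMonoRel anti R →
    (∀ p ∈ R, xor (φ p.1) (φ p.2) ≠ anti) → R.Countable

variable [TopologicalSpace α] [OrderTopology α] [DenselyOrdered α]

theorem IsParityColoring.exists_countable_cover [TopologicalSpace.SeparableSpace α]
    {φ : α → Bool} (hφ : IsParityColoring φ) {anti : Bool} {S : SetRel α α}
    (hS : IsWeakMonoRel anti S) (hviol : ∀ p ∈ S, xor (φ p.1) (φ p.2) ≠ anti) :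
    ∃ A B : Set α, A.Countable ∧ B.Countable ∧ S ⊆ Prod.fst ⁻¹' A ∪ Prod.snd ⁻¹' B := by
  have hstrict : (strictPart S).Countable :=
    hφ anti _ hS.isStrictMonoRel_strictPart fun p hp => hviol p hp.1
  refine ⟨multiValued S ∪ Prod.fst '' strictPart S, multiValued S.inv,
    hS.countable_multiValued.union (hstrict.image _), hS.inv.countable_multiValued,
    fun p hp => ?_⟩
  by_cases hsp : p ∈ strictPart S
  · exact Or.inl (Or.inr (mem_image_of_mem _ hsp))
  · rcases diff_strictPart_subset S ⟨hp, hsp⟩ with h | h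
    exacts [Or.inl (Or.inl h), Or.inr h]

/-- A strictly monotone relation lies in the strict part of its closure up to countably many
vertical and horizontal lines, so it suffices to colour the strict parts of the `≤ 𝔠 = ℵ₁`
closed weakly monotone relations, ranked in type `ω₁`. -/
theorem exists_isParityColoring [SecondCountableTopology α] (hch : (ℵ₁ : Cardinal.{u}) = 𝔠) :
    ∃ φ : α → Bool, IsParityColoring φ := by
  obtain ⟨rank, hrank⟩ := exists_rank_countable_Iic
    ((mk_closeds_le_continuum (X := α × α)).trans_eq hch.symm)
  let ι := {g : TopologicalSpace.Closeds (α × α) × Bool // IsWeakMonoRel g.2 (g.1 : SetRel α α)}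
  obtain ⟨φ, hφ⟩ := exists_coloring_of_rank (R := fun g : ι => strictPart (g.1.1 : SetRel α α))
    (σ := fun g => g.1.2) (fun g => rank g.1.1)
    (fun g => (((hrank g.1.1).prod countable_univ).preimage Subtype.val_injective).mono
      fun k hk => show k.1 ∈ _ ×ˢ Set.univ from ⟨hk, trivial⟩)
    fun g => g.2.isStrictMonoRel_strictPart
  refine ⟨φ, fun anti M hM hviol => ?_⟩
  let g : ι := ⟨(⟨closure M, isClosed_closure⟩, anti), hM.isWeakMonoRel.closure⟩
  have hsub : M ⊆ (M ∩ (Prod.fst ⁻¹' multiValued (closure M) ∪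
      Prod.snd ⁻¹' multiValued (SetRel.inv (closure M)))) ∪
      {p ∈ strictPart (closure M) | xor (φ p.1) (φ p.2) ≠ anti} := by
    intro p hp
    by_cases hs : p ∈ strictPart (closure M)
    · exact Or.inr ⟨hs, hviol p hp⟩
    · exact Or.inl ⟨hp, diff_strictPart_subset _ ⟨subset_closure hp, hs⟩⟩
  refine (Countable.union ?_ (hφ g)).mono hsub
  rw [inter_union_distrib_left]
  exact (hM.countable_inter_preimage_fst g.2.countable_multiValued).union
    (hM.countable_inter_preimage_snd g.2.inv.countable_multiValued)

end ParityColoring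

section SplitOpen

variable {α : Type*} [LinearOrder α]

theorem mem_sideRay_self (c : Bool) (x : α) : x ∈ sideRay c x := by
  cases c
  exacts [le_refl x, le_refl x]

theorem mem_openSideRay {c : Bool} {x y : α} : y ∈ openSideRay c x ↔ orientedLT c y x := by
  cases c <;> rfl

variable [TopologicalSpace α]

def IsSplitOpen (φ : α → Bool) (W : Set (α × α)) : Prop :=
  ∀ z ∈ W, W ∈ 𝓝[sideRay (φ z.1) z.1] z.1 ×ˢ 𝓝[sideRay (φ z.2) z.2] z.2

variable {φ : α → Bool} {W : Set (α × α)}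

theorem isSplitOpen_preimage_toLex [OrderTopology α] [TopologicalSpace (α ×ₗ Bool)]
    [OrderTopology (α ×ₗ Bool)] (φ : α → Bool) {U : Set ((α ×ₗ Bool) × (α ×ₗ Bool))}
    (hU : IsOpen U) :
    IsSplitOpen φ ((fun z : α × α => (toLex (z.1, φ z.1), toLex (z.2, φ z.2))) ⁻¹' U) :=
  fun z hz => by
    have := (tendsto_toLex_nhdsWithin_sideRay φ z.1).prodMap
      (tendsto_toLex_nhdsWithin_sideRay φ z.2)
    rw [← nhds_prod_eq] at this
    exact this (hU.mem_nhds hz)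

theorem IsSplitOpen.preimage_swap (hW : IsSplitOpen φ W) : IsSplitOpen φ (Prod.swap ⁻¹' W) :=
  fun z hz => by
    have := hW z.swap hz
    rw [Filter.prod_comm] at this
    exact this

theorem IsSplitOpen.isFsigma_inter_preimage_fst [OrderTopology α] [SecondCountableTopology α]
    [PerfectlyNormalSpace α] (hW : IsSplitOpen φ W) (a : α) :
    IsFsigma (W ∩ Prod.fst ⁻¹' {a}) := by
  have hslice : IsFsigma (Prod.mk a ⁻¹' W) := isFsigma_of_mem_nhdsWithin_sideRay fun y hy => by
    obtain ⟨t₁, ht₁, t₂, ht₂, hsub⟩ := mem_prod_iff.1 (hW _ hy)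
    exact ⟨φ y, mem_of_superset ht₂ fun y' hy' =>
      hsub ⟨mem_of_mem_nhdsWithin (mem_sideRay_self _ a) ht₁, hy'⟩⟩
  have heq : W ∩ Prod.fst ⁻¹' {a} = Prod.snd ⁻¹' (Prod.mk a ⁻¹' W) ∩ Prod.fst ⁻¹' {a} := by
    ext ⟨x, y⟩
    simp only [mem_inter_iff, Set.mem_preimage, mem_singleton_iff]
    constructor <;> rintro ⟨h, rfl⟩ <;> exact ⟨h, rfl⟩
  rw [heq]
  exact (hslice.preimage continuous_snd).inter_isClosed
    (isClosed_singleton.preimage continuous_fst)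

theorem IsSplitOpen.isFsigma_inter_preimage_snd [OrderTopology α] [SecondCountableTopology α]
    [PerfectlyNormalSpace α] (hW : IsSplitOpen φ W) (b : α) :
    IsFsigma (W ∩ Prod.snd ⁻¹' {b}) :=
  (hW.preimage_swap.isFsigma_inter_preimage_fst b).preimage continuous_swap

end SplitOpen

section SplitOpenMetric

variable {α : Type*} [LinearOrder α] [MetricSpace α] {φ : α → Bool} {W : Set (α × α)}

theorem IsSplitOpen.exists_dist_lt [OrderTopology α] (hW : IsSplitOpen φ W) {z : α × α}
    (hz : z ∈ W) :
    ∃ ε > 0, ∀ q : α × α, dist q z < ε → q.1 ∈ openSideRay (φ z.1) z.1 →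
      q.2 ∈ openSideRay (φ z.2) z.2 → q ∈ interior W := by
  obtain ⟨t₁, ht₁, t₂, ht₂, hsub⟩ := mem_prod_iff.1 (hW z hz)
  obtain ⟨ε₁, hε₁, h₁⟩ := Metric.mem_nhdsWithin_iff.1 ht₁
  obtain ⟨ε₂, hε₂, h₂⟩ := Metric.mem_nhdsWithin_iff.1 ht₂
  refine ⟨min ε₁ ε₂, lt_min hε₁ hε₂, fun q hq hq₁ hq₂ => ?_⟩
  rw [Prod.dist_eq, max_lt_iff, lt_min_iff, lt_min_iff] at hq
  have hopen : IsOpen ((Metric.ball z.1 ε₁ ∩ openSideRay (φ z.1) z.1) ×ˢ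
      (Metric.ball z.2 ε₂ ∩ openSideRay (φ z.2) z.2)) :=
    (Metric.isOpen_ball.inter (isOpen_openSideRay _ _)).prod
      (Metric.isOpen_ball.inter (isOpen_openSideRay _ _))
  refine interior_maximal (fun p hp => hsub ⟨h₁ ⟨hp.1.1, openSideRay_subset_sideRay _ _ hp.1.2⟩,
    h₂ ⟨hp.2.1, openSideRay_subset_sideRay _ _ hp.2.2⟩⟩) hopen ⟨⟨hq.1.1, hq₁⟩, hq.2.2, hq₂⟩

theorem isWeakMonoRel_of_forall_dist_lt {ε : α × α → ℝ}
    (hball : ∀ z ∈ W, ∀ q : α × α, dist q z < ε z → q.1 ∈ openSideRay (φ z.1) z.1 →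
      q.2 ∈ openSideRay (φ z.2) z.2 → q ∈ interior W)
    {T : Set (α × α)} {c d : Bool} (hT : T ⊆ W \ interior W) (hc : ∀ p ∈ T, φ p.1 = c)
    (hd : ∀ p ∈ T, φ p.2 = d) (hdist : ∀ p ∈ T, ∀ q ∈ T, dist q p < ε p) :
    IsWeakMonoRel (c == d) T := by
  intro p hp q hq hlt ho
  cases c
  · refine (hT hp).2 (hball q (hT hq).1 p (hdist q hq p hp) ?_ ?_)
    · rw [hc q hq]
      exact hlt
    · rw [hd q hq, mem_openSideRay, ← orientedLT_not]
      simpa using ho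
  · refine (hT hq).2 (hball p (hT hp).1 q (hdist p hp q hq) ?_ ?_)
    · rw [hc p hp]
      exact hlt
    · rw [hd p hp, mem_openSideRay]
      simpa using ho

theorem IsSplitOpen.exists_countable_cover_diff_interior [OrderTopology α] [DenselyOrdered α]
    [SecondCountableTopology α] (hφ : IsParityColoring φ) (hW : IsSplitOpen φ W) :
    ∃ A B : Set α, A.Countable ∧ B.Countable ∧
      W \ interior W ⊆ Prod.fst ⁻¹' A ∪ Prod.snd ⁻¹' B := by
  choose! ε hε hball using fun z (hz : z ∈ W) => hW.exists_dist_lt hz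
  obtain ⟨D, hDc, hD⟩ := TopologicalSpace.exists_countable_dense (α × α)
  have := hDc.to_subtype
  let piece : Bool × Bool × ℚ × D → Set (α × α) := fun i =>
    {z | z ∈ W \ interior W ∧ φ z.1 = i.1 ∧ φ z.2 = i.2.1 ∧ (i.2.2.1 : ℝ) < ε z ∧
      dist z i.2.2.2 < i.2.2.1 / 2}
  have hcover : ∀ i, ∃ A B : Set α, A.Countable ∧ B.Countable ∧
      piece i ⊆ Prod.fst ⁻¹' A ∪ Prod.snd ⁻¹' B := fun ⟨c, d, r, x⟩ => by
    refine hφ.exists_countable_cover (isWeakMonoRel_of_forall_dist_lt hball (fun z hz => hz.1)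
      (fun z hz => hz.2.1) (fun z hz => hz.2.2.1) fun p hp q hq => ?_) ?_
    · linarith [dist_triangle_right q p x, hp.2.2.2.1, hp.2.2.2.2, hq.2.2.2.2]
    · rintro p ⟨-, hc, hd, -⟩
      rw [hc, hd]
      cases c <;> cases d <;> simp
  choose A B hA hB hAB using hcover
  refine ⟨⋃ i, A i, ⋃ i, B i, countable_iUnion hA, countable_iUnion hB, fun z hz => ?_⟩
  obtain ⟨r, hr, hrε⟩ := exists_rat_btwn (hε z hz.1)
  obtain ⟨x, hxD, hzx⟩ := hD.exists_dist_lt z (half_pos hr)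
  rcases hAB (φ z.1, φ z.2, r, ⟨x, hxD⟩) ⟨hz, rfl, rfl, hrε, hzx⟩ with h | h
  exacts [Or.inl (mem_iUnion.2 ⟨_, h⟩), Or.inr (mem_iUnion.2 ⟨_, h⟩)]

theorem IsSplitOpen.isFsigma [OrderTopology α] [DenselyOrdered α] [SecondCountableTopology α]
    (hφ : IsParityColoring φ) (hW : IsSplitOpen φ W) : IsFsigma W := by
  obtain ⟨A, B, hA, hB, hcover⟩ := hW.exists_countable_cover_diff_interior hφ
  have hW_eq : W = interior W ∪ ((⋃ a ∈ A, W ∩ Prod.fst ⁻¹' {a}) ∪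
      ⋃ b ∈ B, W ∩ Prod.snd ⁻¹' {b}) := by
    refine subset_antisymm (fun z hz => ?_) (union_subset interior_subset (union_subset
      (iUnion₂_subset fun _ _ => inter_subset_left) (iUnion₂_subset fun _ _ => inter_subset_left)))
    by_cases hzi : z ∈ interior W
    · exact Or.inl hzi
    · rcases hcover ⟨hz, hzi⟩ with h | h
      exacts [Or.inr (Or.inl (mem_biUnion h ⟨hz, rfl⟩)),
        Or.inr (Or.inr (mem_biUnion h ⟨hz, rfl⟩))]
  rw [hW_eq]
  exact isOpen_interior.isFsigma.union
    ((IsFsigma.biUnion hA fun a _ => hW.isFsigma_inter_preimage_fst a).union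
      (IsFsigma.biUnion hB fun b _ => hW.isFsigma_inter_preimage_snd b))

end SplitOpenMetric

/-- Under CH (`ω₁ = 𝔠`), the multimap `P⁻¹ : [0,1]² ⊸ Ï²` admits an
Fσ-measurable selection. -/
theorem Fsigma_selection_of_CH (hch : Cardinal.aleph 1 = Cardinal.continuum) :
    ∃ s : Set.Icc (0:ℝ) 1 × Set.Icc (0:ℝ) 1 → SplitInterval × SplitInterval,
      (∀ z, splitProjSq (s z) = z) ∧
      ∀ U : Set (SplitInterval × SplitInterval), IsOpen U → IsFsigma (s ⁻¹' U) := by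
  obtain ⟨φ, hφ⟩ := exists_isParityColoring (α := Set.Icc (0:ℝ) 1)
    (aleph_one_eq_continuum_iff.1 hch)
  exact ⟨fun z => (toLex (z.1, φ z.1), toLex (z.2, φ z.2)), fun _ => rfl,
    fun U hU => (isSplitOpen_preimage_toLex φ hU).isFsigma hφ⟩
end
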